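/- Uniqueness of the optimal contract: if (s,p) and (s′,p′) are both optimal contracts, then s_t = s′_t and p_t = p′_t for every t. -/

import Mathlib

open Set Filter

/-- Principal's continuation value `Π_t(s,p) = Σ_{τ=t}^∞ δ^{τ−t}(π(s_τ) − p_τ)`. -/
noncomputable def PiVal (δ : ℝ) (π : ℝ → ℝ) (s p : ℕ → ℝ) (t : ℕ) : ℝ :=
  ∑' k : ℕ, δ ^ k * (π (s (t + k)) - p (t + k))

/-- Expert's continuation value `W_t(s,p) = Σ_{τ=t}^∞ δ^{τ−t}(w(s_τ) + p_τ)`. -/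
noncomputable def WVal (δ : ℝ) (w : ℝ → ℝ) (s p : ℕ → ℝ) (t : ℕ) : ℝ :=
  ∑' k : ℕ, δ ^ k * (w (s (t + k)) + p (t + k))

/-- A contract: `s` takes values in `[0,1]`, `s 0 = 0`, and `t ↦ δ^t·p_t` is summable. -/
def IsContract (δ : ℝ) (s p : ℕ → ℝ) : Prop :=
  (∀ t, s t ∈ Set.Icc (0 : ℝ) 1) ∧ s 0 = 0 ∧ Summable fun t => δ ^ t * p t

/-- Implementability: feasibility (monotone `s`, nonnegative `p`) plus (P-IC) and (E-IC). -/
def Implementable (δ : ℝ) (π w : ℝ → ℝ) (s p : ℕ → ℝ) : Prop :=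
  IsContract δ s p ∧ Monotone s ∧ (∀ t, 0 ≤ p t) ∧
  (∀ t, π (s t) / (1 - δ) ≤ PiVal δ π s p t) ∧
  (∀ t, w (s t) / (1 - δ) ≤ WVal δ w s p (t + 1))

/-- An optimal contract maximizes the principal's time-0 profit among implementable contracts. -/
def Optimal (δ : ℝ) (π w : ℝ → ℝ) (s p : ℕ → ℝ) : Prop :=
  Implementable δ π w s p ∧
  ∀ s' p' : ℕ → ℝ, Implementable δ π w s' p' → PiVal δ π s' p' 0 ≤ PiVal δ π s p 0

/-!
Write `S_t = Σ_k δ^k (π + w)(s_{t+k})` for the discounted total surplus, so that `Π_t + W_t = S_t`.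
Adding (P-IC) at `t + 1` and (E-IC) at `t` gives the joint constraint
`π(s_{t+1}) + w(s_t) ≤ (1 - δ) S_{t+1}`, and (E-IC) at `0` gives `W_0 ≥ w(0)/(1 - δ)`. Conversely every
monotone path satisfying the joint constraints is implemented by the payments
`p_{t+1} = (w(s_t) - w(s_{t+1}))/(1 - δ)` with `Π_0 = S_0 - w(0)/(1 - δ)`. So an optimal contract
maximises `S_0` over such paths, and at the optimum every joint constraint binds: slack persists along
a flat stretch of the path and cannot last forever, so it reaches a jump `s_{t+1} < s_{t+2}`, where
raising `s_{t+1}` slightly keeps every constraint (continuity of `π`) and strictly raises `S_0`.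
Binding constraints determine `s_{t+1}` from `s_t` and `S_t` (`π` is injective), and they force
`W_{t+1} = w(s_t)/(1 - δ)`, which pins down the payments.
-/

noncomputable def discountedSum (δ : ℝ) (a : ℕ → ℝ) (t : ℕ) : ℝ :=
  ∑' k : ℕ, δ ^ k * a (t + k)

section DiscountedSum

variable {δ : ℝ} {a b : ℕ → ℝ}

theorem summable_discounted_of_abs_le (hδ0 : 0 ≤ δ) (hδ1 : δ < 1) {C : ℝ}
    (h : ∀ t, |a t| ≤ C) : Summable fun t => δ ^ t * a t := by
  refine Summable.of_norm_bounded ((summable_geometric_of_lt_one hδ0 hδ1).mul_left C) fun t => ?_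
  rw [Real.norm_eq_abs, abs_mul, abs_pow, abs_of_nonneg hδ0, mul_comm]
  exact mul_le_mul_of_nonneg_right (h t) (pow_nonneg hδ0 t)

theorem summable_discounted_comp {K : Set ℝ} {f : ℝ → ℝ} {s : ℕ → ℝ} (hδ0 : 0 ≤ δ)
    (hδ1 : δ < 1) (hK : IsCompact K) (hf : ContinuousOn f K) (hs : ∀ t, s t ∈ K) :
    Summable fun t => δ ^ t * f (s t) := by
  obtain ⟨C, hC⟩ := hK.exists_bound_of_continuousOn hf
  exact summable_discounted_of_abs_le hδ0 hδ1 fun t => hC _ (hs t)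

theorem summable_discounted_shift (hδ : δ ≠ 0) (ha : Summable fun t => δ ^ t * a t) (t : ℕ) :
    Summable fun k => δ ^ k * a (t + k) := by
  refine (((summable_nat_add_iff t).mpr ha).mul_left (δ ^ t)⁻¹).congr fun k => ?_
  rw [add_comm k t, pow_add, ← mul_assoc, ← mul_assoc, inv_mul_cancel₀ (pow_ne_zero t hδ),
    one_mul]

theorem discountedSum_eq_add (hδ : δ ≠ 0) (ha : Summable fun t => δ ^ t * a t) (t : ℕ) :
    discountedSum δ a t = a t + δ * discountedSum δ a (t + 1) := by
  rw [discountedSum, (summable_discounted_shift hδ ha t).tsum_eq_zero_add, discountedSum,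
    ← tsum_mul_left]
  simp only [pow_zero, one_mul, add_zero, pow_succ]
  congr 1
  exact tsum_congr fun k => by rw [add_right_comm, add_assoc]; ring

theorem discountedSum_add (hδ : δ ≠ 0) (ha : Summable fun t => δ ^ t * a t)
    (hb : Summable fun t => δ ^ t * b t) (t : ℕ) :
    discountedSum δ (fun τ => a τ + b τ) t = discountedSum δ a t + discountedSum δ b t := by
  rw [discountedSum, discountedSum, discountedSum, ← (summable_discounted_shift hδ ha t).tsum_add
    (summable_discounted_shift hδ hb t)]
  exact tsum_congr fun k => mul_add _ _ _

theorem discountedSum_eq_of_forall_eq (hδ0 : 0 ≤ δ) (hδ1 : δ < 1) {c : ℝ} {t : ℕ}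
    (h : ∀ k, a (t + k) = c) : discountedSum δ a t = c / (1 - δ) := by
  simp only [discountedSum, h, tsum_mul_right, tsum_geometric_of_lt_one hδ0 hδ1, div_eq_inv_mul]

theorem discountedSum_mono (hδ : 0 < δ) (ha : Summable fun t => δ ^ t * a t)
    (hb : Summable fun t => δ ^ t * b t) (h : ∀ τ, a τ ≤ b τ) (t : ℕ) :
    discountedSum δ a t ≤ discountedSum δ b t :=
  (summable_discounted_shift hδ.ne' ha t).tsum_le_tsum
    (fun k => mul_le_mul_of_nonneg_left (h _) (pow_nonneg hδ.le k))
    (summable_discounted_shift hδ.ne' hb t)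

theorem discountedSum_zero_lt (hδ : 0 < δ) (ha : Summable fun t => δ ^ t * a t)
    (hb : Summable fun t => δ ^ t * b t) (h : ∀ τ, a τ ≤ b τ) {v : ℕ} (hv : a v < b v) :
    discountedSum δ a 0 < discountedSum δ b 0 := by
  simp only [discountedSum, zero_add]
  exact ha.tsum_lt_tsum (fun k => mul_le_mul_of_nonneg_left (h k) (pow_nonneg hδ.le k))
    (mul_lt_mul_of_pos_left hv (pow_pos hδ v)) hb

end DiscountedSum

theorem ContinuousWithinAt.exists_mem_Ioc_lt_add {f : ℝ → ℝ} {a b ε : ℝ}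
    (hf : ContinuousWithinAt f (Ioc a b) a) (hab : a < b) (hε : 0 < ε) :
    ∃ y ∈ Ioc a b, f y < f a + ε := by
  have h := hf.eventually (gt_mem_nhds (lt_add_of_pos_right (f a) hε))
  rw [nhdsWithin_Ioc_eq_nhdsGT hab] at h
  obtain ⟨y, hy, hyab⟩ := (h.and (Ioc_mem_nhdsGT hab)).exists
  exact ⟨y, hyab, hy⟩

theorem Monotone.update_succ {α : Type*} [Preorder α] {s : ℕ → α} (hs : Monotone s) {t : ℕ}
    {y : α} (h₁ : s t ≤ y) (h₂ : y ≤ s (t + 2)) :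
    Monotone (Function.update s (t + 1) y) := by
  refine monotone_nat_of_le_succ fun n => ?_
  simp only [Function.update_apply]
  split_ifs with hn hn'
  · omega
  · subst hn; exact h₂
  · rwa [show n = t by omega]
  · exact hs n.le_succ

noncomputable def surplus (δ : ℝ) (π w : ℝ → ℝ) (s : ℕ → ℝ) : ℕ → ℝ :=
  discountedSum δ fun τ => π (s τ) + w (s τ)

noncomputable def bindingPayment (δ : ℝ) (w : ℝ → ℝ) (s : ℕ → ℝ) : ℕ → ℝ
  | 0 => 0
  | t + 1 => (w (s t) - w (s (t + 1))) / (1 - δ)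

structure IsRelaxedPath (δ : ℝ) (π w : ℝ → ℝ) (s : ℕ → ℝ) : Prop where
  mem_Icc : ∀ t, s t ∈ Icc (0 : ℝ) 1
  zero : s 0 = 0
  mono : Monotone s
  jointIC : ∀ t, π (s (t + 1)) + w (s t) ≤ (1 - δ) * surplus δ π w s (t + 1)

section Contract

variable {δ : ℝ} {π w : ℝ → ℝ} {s p : ℕ → ℝ}

theorem summable_discounted_comp_Icc (hδ : δ ∈ Ioo (0 : ℝ) 1) {f : ℝ → ℝ}
    (hf : ContinuousOn f (Icc 0 1)) (hs : ∀ t, s t ∈ Icc (0 : ℝ) 1) :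
    Summable fun t => δ ^ t * f (s t) :=
  summable_discounted_comp hδ.1.le hδ.2 isCompact_Icc hf hs

theorem WVal_eq_add (hδ : δ ∈ Ioo (0 : ℝ) 1) (hwc : ContinuousOn w (Icc 0 1))
    (hs : ∀ t, s t ∈ Icc (0 : ℝ) 1) (hp : Summable fun t => δ ^ t * p t) (t : ℕ) :
    WVal δ w s p t = w (s t) + p t + δ * WVal δ w s p (t + 1) :=
  discountedSum_eq_add hδ.1.ne'
    (((summable_discounted_comp_Icc hδ hwc hs).add hp).congr fun _ => (mul_add _ _ _).symm) t

theorem surplus_eq_add (hδ : δ ∈ Ioo (0 : ℝ) 1) (hπc : ContinuousOn π (Icc 0 1))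
    (hwc : ContinuousOn w (Icc 0 1)) (hs : ∀ t, s t ∈ Icc (0 : ℝ) 1) (t : ℕ) :
    surplus δ π w s t = π (s t) + w (s t) + δ * surplus δ π w s (t + 1) :=
  discountedSum_eq_add hδ.1.ne' (summable_discounted_comp_Icc hδ (hπc.add hwc) hs) t

theorem PiVal_add_WVal (hδ : δ ∈ Ioo (0 : ℝ) 1) (hπc : ContinuousOn π (Icc 0 1))
    (hwc : ContinuousOn w (Icc 0 1)) (hs : ∀ t, s t ∈ Icc (0 : ℝ) 1)
    (hp : Summable fun t => δ ^ t * p t) (t : ℕ) :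
    PiVal δ π s p t + WVal δ w s p t = surplus δ π w s t := by
  have hπ := summable_discounted_comp_Icc hδ hπc hs
  have hw := summable_discounted_comp_Icc hδ hwc hs
  calc PiVal δ π s p t + WVal δ w s p t
      = discountedSum δ (fun τ => π (s τ) - p τ) t
          + discountedSum δ (fun τ => w (s τ) + p τ) t := rfl
    _ = discountedSum δ (fun τ => π (s τ) - p τ + (w (s τ) + p τ)) t :=
        (discountedSum_add hδ.1.ne' ((hπ.sub hp).congr fun _ => (mul_sub _ _ _).symm)
          ((hw.add hp).congr fun _ => (mul_add _ _ _).symm) t).symm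
    _ = surplus δ π w s t := by
        simp only [surplus, sub_add_add_cancel]

theorem Implementable.isRelaxedPath (hδ : δ ∈ Ioo (0 : ℝ) 1)
    (hπc : ContinuousOn π (Icc 0 1)) (hwc : ContinuousOn w (Icc 0 1))
    (h : Implementable δ π w s p) : IsRelaxedPath δ π w s := by
  obtain ⟨hc, hsm, -, hPIC, hEIC⟩ := h
  refine ⟨hc.1, hc.2.1, hsm, fun t => ?_⟩
  have hPI := hPIC (t + 1)
  have hEI := hEIC t
  rw [div_le_iff₀ (sub_pos.2 hδ.2)] at hPI hEI
  rw [← PiVal_add_WVal hδ hπc hwc hc.1 hc.2.2]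
  linarith

theorem Implementable.WVal_zero_ge (hδ : δ ∈ Ioo (0 : ℝ) 1) (hwc : ContinuousOn w (Icc 0 1))
    (h : Implementable δ π w s p) : w 0 / (1 - δ) ≤ WVal δ w s p 0 := by
  obtain ⟨hc, -, hp, -, hEIC⟩ := h
  have hEI := mul_le_mul_of_nonneg_left (hEIC 0) hδ.1.le
  have hrec := WVal_eq_add hδ hwc hc.1 hc.2.2 0
  rw [hc.2.1] at hEI hrec
  have : w 0 / (1 - δ) = w 0 + δ * (w 0 / (1 - δ)) := by
    field_simp [(sub_pos.2 hδ.2).ne']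
    ring
  linarith [hp 0]

theorem bindingPayment_nonneg (hδ : δ < 1) (hw : AntitoneOn w (Icc 0 1))
    (hs : ∀ t, s t ∈ Icc (0 : ℝ) 1) (hsm : Monotone s) (t : ℕ) :
    0 ≤ bindingPayment δ w s t := by
  cases t with
  | zero => exact le_rfl
  | succ t =>
    exact div_nonneg (sub_nonneg.2 (hw (hs t) (hs (t + 1)) (hsm t.le_succ))) (sub_pos.2 hδ).le

theorem summable_bindingPayment (hδ : δ ∈ Ioo (0 : ℝ) 1) (hwc : ContinuousOn w (Icc 0 1))
    (hs : ∀ t, s t ∈ Icc (0 : ℝ) 1) : Summable fun t => δ ^ t * bindingPayment δ w s t := by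
  have hw := summable_discounted_comp_Icc hδ hwc hs
  refine (summable_nat_add_iff 1).mp <|
    (((hw.mul_left δ).sub ((summable_nat_add_iff 1).mpr hw)).div_const (1 - δ)).congr fun t => ?_
  simp only [bindingPayment, pow_succ]
  ring

theorem WVal_bindingPayment_succ (hδ : δ ∈ Ioo (0 : ℝ) 1) (hwc : ContinuousOn w (Icc 0 1))
    (hs : ∀ t, s t ∈ Icc (0 : ℝ) 1) (t : ℕ) :
    WVal δ w s (bindingPayment δ w s) (t + 1) = w (s t) / (1 - δ) := by
  have hw := summable_discounted_comp_Icc hδ hwc hs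
  have h1 := summable_discounted_shift hδ.1.ne' hw t
  have h2 := (summable_discounted_shift hδ.1.ne' hw (t + 1)).mul_left δ
  have h1δ : 1 - δ ≠ 0 := (sub_pos.2 hδ.2).ne'
  calc WVal δ w s (bindingPayment δ w s) (t + 1)
      = ∑' k, (δ ^ k * w (s (t + k)) - δ * (δ ^ k * w (s (t + 1 + k)))) / (1 - δ) :=
        tsum_congr fun k => by
          rw [add_right_comm, bindingPayment]
          field_simp
          ring_nf
    _ = (discountedSum δ (fun τ => w (s τ)) t
          - δ * discountedSum δ (fun τ => w (s τ)) (t + 1)) / (1 - δ) := by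
        rw [tsum_div_const, h1.tsum_sub h2, tsum_mul_left]
        rfl
    _ = w (s t) / (1 - δ) := by
        rw [discountedSum_eq_add hδ.1.ne' hw t, add_sub_cancel_right]

theorem WVal_bindingPayment_zero (hδ : δ ∈ Ioo (0 : ℝ) 1) (hwc : ContinuousOn w (Icc 0 1))
    (hs : ∀ t, s t ∈ Icc (0 : ℝ) 1) :
    WVal δ w s (bindingPayment δ w s) 0 = w (s 0) / (1 - δ) := by
  rw [WVal_eq_add hδ hwc hs (summable_bindingPayment hδ hwc hs),
    WVal_bindingPayment_succ hδ hwc hs, bindingPayment]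
  field_simp [(sub_pos.2 hδ.2).ne']
  ring

theorem IsRelaxedPath.PiVal_bindingPayment_zero (hδ : δ ∈ Ioo (0 : ℝ) 1)
    (hπc : ContinuousOn π (Icc 0 1)) (hwc : ContinuousOn w (Icc 0 1))
    (hs : IsRelaxedPath δ π w s) :
    PiVal δ π s (bindingPayment δ w s) 0 = surplus δ π w s 0 - w 0 / (1 - δ) := by
  rw [← PiVal_add_WVal hδ hπc hwc hs.mem_Icc (summable_bindingPayment hδ hwc hs.mem_Icc),
    WVal_bindingPayment_zero hδ hwc hs.mem_Icc, hs.zero, add_sub_cancel_right]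

theorem IsRelaxedPath.implementable_bindingPayment (hδ : δ ∈ Ioo (0 : ℝ) 1)
    (hπc : ContinuousOn π (Icc 0 1)) (hwc : ContinuousOn w (Icc 0 1))
    (hπm : MonotoneOn π (Icc 0 1)) (hw : AntitoneOn w (Icc 0 1)) (hs : IsRelaxedPath δ π w s) :
    Implementable δ π w s (bindingPayment δ w s) := by
  have hp := summable_bindingPayment hδ hwc hs.mem_Icc
  have h1δ : 0 < 1 - δ := sub_pos.2 hδ.2
  refine ⟨⟨hs.mem_Icc, hs.zero, hp⟩, hs.mono,
    bindingPayment_nonneg hδ.2 hw hs.mem_Icc hs.mono, fun t => ?_,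
    fun t => (WVal_bindingPayment_succ hδ hwc hs.mem_Icc t).ge⟩
  rw [div_le_iff₀ h1δ]
  cases t with
  | zero =>
    have hJ := mul_le_mul_of_nonneg_left (hs.jointIC 0) hδ.1.le
    have hπ := mul_le_mul_of_nonneg_left
      (hπm (hs.mem_Icc 0) (hs.mem_Icc 1) (hs.mono zero_le_one)) hδ.1.le
    rw [hs.PiVal_bindingPayment_zero hδ hπc hwc, sub_mul, div_mul_cancel₀ _ h1δ.ne',
      surplus_eq_add hδ hπc hwc hs.mem_Icc 0]
    rw [hs.zero] at hJ hπ ⊢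
    linarith
  | succ t =>
    have hPW := PiVal_add_WVal hδ hπc hwc hs.mem_Icc hp (t + 1)
    rw [WVal_bindingPayment_succ hδ hwc hs.mem_Icc] at hPW
    rw [eq_sub_of_add_eq hPW, sub_mul, div_mul_cancel₀ _ h1δ.ne']
    linarith [hs.jointIC t]

theorem surplus_le_surplus (hδ : δ ∈ Ioo (0 : ℝ) 1) (hπc : ContinuousOn π (Icc 0 1))
    (hwc : ContinuousOn w (Icc 0 1)) (hG : MonotoneOn (fun x => π x + w x) (Icc 0 1))
    {x : ℕ → ℝ} (hsI : ∀ t, s t ∈ Icc (0 : ℝ) 1) (hxI : ∀ t, x t ∈ Icc (0 : ℝ) 1)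
    (hle : ∀ t, s t ≤ x t) (t : ℕ) : surplus δ π w s t ≤ surplus δ π w x t :=
  discountedSum_mono hδ.1 (summable_discounted_comp_Icc hδ (hπc.add hwc) hsI)
    (summable_discounted_comp_Icc hδ (hπc.add hwc) hxI)
    (fun τ => hG (hsI τ) (hxI τ) (hle τ)) t

theorem jointIC_lt_succ (hδ : δ ∈ Ioo (0 : ℝ) 1) (hπc : ContinuousOn π (Icc 0 1))
    (hwc : ContinuousOn w (Icc 0 1)) (hw : AntitoneOn w (Icc 0 1))
    (hsI : ∀ t, s t ∈ Icc (0 : ℝ) 1) (hsm : Monotone s) {t : ℕ}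
    (hlt : π (s (t + 1)) + w (s t) < (1 - δ) * surplus δ π w s (t + 1))
    (hflat : s (t + 1) = s (t + 2)) :
    π (s (t + 2)) + w (s (t + 1)) < (1 - δ) * surplus δ π w s (t + 2) := by
  have hwt := hw (hsI t) (hsI (t + 1)) (hsm t.le_succ)
  rw [surplus_eq_add hδ hπc hwc hsI (t + 1)] at hlt
  rw [← hflat]
  refine lt_of_mul_lt_mul_left ?_ hδ.1.le
  linarith

theorem jointIC_ge_of_forall_eq (hδ : δ ∈ Ioo (0 : ℝ) 1) (hw : AntitoneOn w (Icc 0 1))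
    (hsI : ∀ t, s t ∈ Icc (0 : ℝ) 1) (hsm : Monotone s) {t : ℕ}
    (hconst : ∀ k, s (t + 1 + k) = s (t + 1)) :
    (1 - δ) * surplus δ π w s (t + 1) ≤ π (s (t + 1)) + w (s t) := by
  rw [surplus, discountedSum_eq_of_forall_eq hδ.1.le hδ.2 fun k => by rw [hconst k],
    mul_div_cancel₀ _ (sub_pos.2 hδ.2).ne']
  linarith [hw (hsI t) (hsI (t + 1)) (hsm t.le_succ)]

theorem exists_jointIC_lt_of_lt (hδ : δ ∈ Ioo (0 : ℝ) 1) (hπc : ContinuousOn π (Icc 0 1))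
    (hwc : ContinuousOn w (Icc 0 1)) (hw : AntitoneOn w (Icc 0 1))
    (hsI : ∀ t, s t ∈ Icc (0 : ℝ) 1) (hsm : Monotone s) {u : ℕ}
    (hlt : π (s (u + 1)) + w (s u) < (1 - δ) * surplus δ π w s (u + 1)) :
    ∃ t, π (s (t + 1)) + w (s t) < (1 - δ) * surplus δ π w s (t + 1) ∧
      s (t + 1) < s (t + 2) := by
  by_contra! hflat
  have key : ∀ k,
      π (s (u + k + 1)) + w (s (u + k)) < (1 - δ) * surplus δ π w s (u + k + 1) ∧
        s (u + 1 + k) = s (u + 1) := by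
    intro k
    induction k with
    | zero => exact ⟨hlt, rfl⟩
    | succ k ih =>
      have hk := le_antisymm (hflat _ ih.1) (hsm (u + k + 1).le_succ)
      refine ⟨jointIC_lt_succ hδ hπc hwc hw hsI hsm ih.1 hk.symm, ?_⟩
      rw [← ih.2, show u + 1 + (k + 1) = u + k + 2 by omega, hk, add_right_comm]
  exact (jointIC_ge_of_forall_eq hδ hw hsI hsm fun k => (key k).2).not_gt hlt

theorem IsRelaxedPath.exists_surplus_zero_lt (hδ : δ ∈ Ioo (0 : ℝ) 1)
    (hπc : ContinuousOn π (Icc 0 1)) (hwc : ContinuousOn w (Icc 0 1))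
    (hw : AntitoneOn w (Icc 0 1)) (hG : StrictMonoOn (fun x => π x + w x) (Icc 0 1))
    (hs : IsRelaxedPath δ π w s) {t : ℕ}
    (hlt : π (s (t + 1)) + w (s t) < (1 - δ) * surplus δ π w s (t + 1))
    (hjump : s (t + 1) < s (t + 2)) :
    ∃ x, IsRelaxedPath δ π w x ∧ surplus δ π w s 0 < surplus δ π w x 0 := by
  have hIoc : Ioc (s (t + 1)) (s (t + 2)) ⊆ Icc 0 1 :=
    Ioc_subset_Icc_self.trans (Icc_subset_Icc (hs.mem_Icc _).1 (hs.mem_Icc _).2)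
  obtain ⟨y, ⟨hay, hyb⟩, hπy⟩ :=
    ((hπc _ (hs.mem_Icc (t + 1))).mono hIoc).exists_mem_Ioc_lt_add hjump (sub_pos.2 hlt)
  set x := Function.update s (t + 1) y with hx
  have hxI : ∀ τ, x τ ∈ Icc (0 : ℝ) 1 := fun τ => by
    by_cases hτ : τ = t + 1
    · rw [hx, hτ, Function.update_self]; exact hIoc ⟨hay, hyb⟩
    · rw [hx, Function.update_of_ne hτ]; exact hs.mem_Icc τ
  have hle : ∀ τ, s τ ≤ x τ := fun τ => by
    by_cases hτ : τ = t + 1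
    · rw [hx, hτ, Function.update_self]; exact hay.le
    · rw [hx, Function.update_of_ne hτ]
  have hS τ := mul_le_mul_of_nonneg_left
    (surplus_le_surplus hδ hπc hwc hG.monotoneOn hs.mem_Icc hxI hle τ) (sub_pos.2 hδ.2).le
  -- The slack at `t` absorbs the rise of `π` at `t + 1`; every other constraint only gets easier.
  refine ⟨x, ⟨hxI, by rw [hx, Function.update_of_ne (by omega), hs.zero],
    hs.mono.update_succ (hs.mono t.le_succ |>.trans hay.le) hyb, fun τ => ?_⟩, ?_⟩
  · by_cases hτ : τ = t
    · subst hτ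
      rw [hx, Function.update_self, Function.update_of_ne (by omega)]
      linarith [hS (τ + 1)]
    · rw [hx, Function.update_of_ne (by omega : τ + 1 ≠ t + 1)]
      linarith [hs.jointIC τ, hS (τ + 1), hw (hs.mem_Icc τ) (hxI τ) (hle τ)]
  · refine discountedSum_zero_lt hδ.1 (summable_discounted_comp_Icc hδ (hπc.add hwc) hs.mem_Icc)
      (summable_discounted_comp_Icc hδ (hπc.add hwc) hxI)
      (fun τ => hG.monotoneOn (hs.mem_Icc τ) (hxI τ) (hle τ)) (v := t + 1) ?_
    rw [hx, Function.update_self]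
    exact hG (hs.mem_Icc _) (hIoc ⟨hay, hyb⟩) hay

theorem Optimal.jointIC_eq (hδ : δ ∈ Ioo (0 : ℝ) 1) (hπc : ContinuousOn π (Icc 0 1))
    (hwc : ContinuousOn w (Icc 0 1)) (hπm : MonotoneOn π (Icc 0 1)) (hw : AntitoneOn w (Icc 0 1))
    (hG : StrictMonoOn (fun x => π x + w x) (Icc 0 1)) (hopt : Optimal δ π w s p) (t : ℕ) :
    (1 - δ) * surplus δ π w s (t + 1) = π (s (t + 1)) + w (s t) := by
  have hs := hopt.1.isRelaxedPath hδ hπc hwc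
  refine le_antisymm (not_lt.1 fun hlt => ?_) (hs.jointIC t)
  obtain ⟨u, hu, hjump⟩ := exists_jointIC_lt_of_lt hδ hπc hwc hw hs.mem_Icc hs.mono hlt
  obtain ⟨x, hx, hSx⟩ := hs.exists_surplus_zero_lt hδ hπc hwc hw hG hu hjump
  have hPx := hopt.2 x _ (hx.implementable_bindingPayment hδ hπc hwc hπm hw)
  rw [hx.PiVal_bindingPayment_zero hδ hπc hwc] at hPx
  linarith [PiVal_add_WVal hδ hπc hwc hs.mem_Icc hopt.1.1.2.2 0, hopt.1.WVal_zero_ge hδ hwc]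

theorem Optimal.WVal_zero (hδ : δ ∈ Ioo (0 : ℝ) 1) (hπc : ContinuousOn π (Icc 0 1))
    (hwc : ContinuousOn w (Icc 0 1)) (hπm : MonotoneOn π (Icc 0 1)) (hw : AntitoneOn w (Icc 0 1))
    (hopt : Optimal δ π w s p) : WVal δ w s p 0 = w 0 / (1 - δ) := by
  have hs := hopt.1.isRelaxedPath hδ hπc hwc
  have hP := hopt.2 s _ (hs.implementable_bindingPayment hδ hπc hwc hπm hw)
  rw [hs.PiVal_bindingPayment_zero hδ hπc hwc] at hP
  linarith [PiVal_add_WVal hδ hπc hwc hs.mem_Icc hopt.1.1.2.2 0, hopt.1.WVal_zero_ge hδ hwc]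

theorem Optimal.WVal_succ (hδ : δ ∈ Ioo (0 : ℝ) 1) (hπc : ContinuousOn π (Icc 0 1))
    (hwc : ContinuousOn w (Icc 0 1)) (hπm : MonotoneOn π (Icc 0 1)) (hw : AntitoneOn w (Icc 0 1))
    (hG : StrictMonoOn (fun x => π x + w x) (Icc 0 1)) (hopt : Optimal δ π w s p) (t : ℕ) :
    WVal δ w s p (t + 1) = w (s t) / (1 - δ) := by
  obtain ⟨hc, -, -, hPIC, hEIC⟩ := hopt.1
  have h1δ := sub_pos.2 hδ.2
  have hPI := (div_le_iff₀ h1δ).1 (hPIC (t + 1))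
  have hJ := hopt.jointIC_eq hδ hπc hwc hπm hw hG t
  rw [← PiVal_add_WVal hδ hπc hwc hc.1 hc.2.2 (t + 1)] at hJ
  refine le_antisymm ?_ (hEIC t)
  rw [le_div_iff₀ h1δ]
  linarith

theorem Optimal.eq_bindingPayment (hδ : δ ∈ Ioo (0 : ℝ) 1) (hπc : ContinuousOn π (Icc 0 1))
    (hwc : ContinuousOn w (Icc 0 1)) (hπm : MonotoneOn π (Icc 0 1)) (hw : AntitoneOn w (Icc 0 1))
    (hG : StrictMonoOn (fun x => π x + w x) (Icc 0 1)) (hopt : Optimal δ π w s p) :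
    p = bindingPayment δ w s := by
  have hc := hopt.1.1
  have h1δ := (sub_pos.2 hδ.2).ne'
  funext t
  have hrec := WVal_eq_add hδ hwc hc.1 hc.2.2 t
  cases t with
  | zero =>
    rw [hopt.WVal_zero hδ hπc hwc hπm hw, hopt.WVal_succ hδ hπc hwc hπm hw hG, hc.2.1] at hrec
    rw [bindingPayment]
    field_simp at hrec
    exact (mul_eq_zero.1 (by linarith : (1 - δ) * p 0 = 0)).resolve_left h1δ
  | succ t =>
    rw [hopt.WVal_succ hδ hπc hwc hπm hw hG, hopt.WVal_succ hδ hπc hwc hπm hw hG] at hrec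
    rw [bindingPayment, eq_div_iff h1δ]
    field_simp at hrec
    linarith

theorem eq_of_jointIC_eq (hδ : δ ∈ Ioo (0 : ℝ) 1) (hπc : ContinuousOn π (Icc 0 1))
    (hwc : ContinuousOn w (Icc 0 1)) (hπ : InjOn π (Icc 0 1)) {s' : ℕ → ℝ}
    (hsI : ∀ t, s t ∈ Icc (0 : ℝ) 1) (hs'I : ∀ t, s' t ∈ Icc (0 : ℝ) 1)
    (h0 : s 0 = s' 0) (hS : surplus δ π w s 0 = surplus δ π w s' 0)
    (hb : ∀ t, (1 - δ) * surplus δ π w s (t + 1) = π (s (t + 1)) + w (s t))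
    (hb' : ∀ t, (1 - δ) * surplus δ π w s' (t + 1) = π (s' (t + 1)) + w (s' t)) : s = s' := by
  suffices ∀ t, s t = s' t ∧ surplus δ π w s t = surplus δ π w s' t from
    funext fun t => (this t).1
  intro t
  induction t with
  | zero => exact ⟨h0, hS⟩
  | succ t ih =>
    obtain ⟨hst, hSt⟩ := ih
    rw [surplus_eq_add hδ hπc hwc hsI, surplus_eq_add hδ hπc hwc hs'I, hst] at hSt
    have hS1 := mul_left_cancel₀ hδ.1.ne' (add_left_cancel hSt)
    have hbt := hb t
    rw [hS1, hst] at hbt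
    refine ⟨hπ (hsI _) (hs'I _) ?_, hS1⟩
    linarith [hb' t]

theorem Optimal.surplus_zero_eq (hδ : δ ∈ Ioo (0 : ℝ) 1) (hπc : ContinuousOn π (Icc 0 1))
    (hwc : ContinuousOn w (Icc 0 1)) (hπm : MonotoneOn π (Icc 0 1)) (hw : AntitoneOn w (Icc 0 1))
    {s' p' : ℕ → ℝ} (hopt : Optimal δ π w s p) (hopt' : Optimal δ π w s' p') :
    surplus δ π w s 0 = surplus δ π w s' 0 := by
  rw [← PiVal_add_WVal hδ hπc hwc hopt.1.1.1 hopt.1.1.2.2,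
    ← PiVal_add_WVal hδ hπc hwc hopt'.1.1.1 hopt'.1.1.2.2, hopt.WVal_zero hδ hπc hwc hπm hw,
    hopt'.WVal_zero hδ hπc hwc hπm hw, le_antisymm (hopt'.2 s p hopt.1) (hopt.2 s' p' hopt'.1)]

end Contract

/-- Uniqueness of the optimal contract. -/
theorem optimal_contract_unique
    (δ : ℝ) (hδ : δ ∈ Set.Ioo (0 : ℝ) 1) (π w : ℝ → ℝ)
    (hπc : ContinuousOn π (Set.Icc 0 1)) (hwc : ContinuousOn w (Set.Icc 0 1))
    (hπm : StrictMonoOn π (Set.Icc 0 1)) (hwa : StrictAntiOn w (Set.Icc 0 1))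
    (hGm : StrictMonoOn (fun x => π x + w x) (Set.Icc 0 1))
    (s p s' p' : ℕ → ℝ) (hopt : Optimal δ π w s p) (hopt' : Optimal δ π w s' p') :
    (∀ t, s t = s' t) ∧ (∀ t, p t = p' t) := by
  have hs : s = s' :=
    eq_of_jointIC_eq hδ hπc hwc hπm.injOn hopt.1.1.1 hopt'.1.1.1
      (hopt.1.1.2.1.trans hopt'.1.1.2.1.symm)
      (hopt.surplus_zero_eq hδ hπc hwc hπm.monotoneOn hwa.antitoneOn hopt')
      (hopt.jointIC_eq hδ hπc hwc hπm.monotoneOn hwa.antitoneOn hGm)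
      (hopt'.jointIC_eq hδ hπc hwc hπm.monotoneOn hwa.antitoneOn hGm)
  subst hs
  have hp : p = p' :=
    (hopt.eq_bindingPayment hδ hπc hwc hπm.monotoneOn hwa.antitoneOn hGm).trans
      (hopt'.eq_bindingPayment hδ hπc hwc hπm.monotoneOn hwa.antitoneOn hGm).symm
  exact ⟨fun _ => rfl, congrFun hp⟩
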